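/- Let $f : \mathbb{R}^n \to \mathbb{R}^n$ be continuously differentiable, and consider the closed-loop perturbation dynamics $\delta x_{t+1} = \bar{A}_t \delta x_t + \bar{S}_t(\delta x_t) + \epsilon w_t$ where each $\bar{S}_t : \mathbb{R}^n \to \mathbb{R}^n$ satisfies $\|\bar{S}_t(z)\| \le L \|z\|^2$ for all $\|z\| \le 1$, $\|\bar{A}_t\| \le M$, $\|w_t\| \le W$ for all $t \le T$, and $\delta x_0 = 0$. Define the linear part by $\delta x^l_0 = 0$, $\delta x^l_{t+1} = \bar{A}_t \delta x^l_t + \epsilon w_t$. Then there exists $\epsilon_0 > 0$ and a constant $K$ (depending on $L, M, W, T$) such that for all $0 < \epsilon < \epsilon_0$ and all $t \le T$, $\|\delta x_t - \delta x^l_t\| \le K \epsilon^2$. -/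
import Mathlib


open Finset

theorem stmt8 (n T : ℕ)
    (A : ℕ → EuclideanSpace ℝ (Fin n) →L[ℝ] EuclideanSpace ℝ (Fin n))
    (S : ℕ → EuclideanSpace ℝ (Fin n) → EuclideanSpace ℝ (Fin n))
    (w : ℕ → EuclideanSpace ℝ (Fin n))
    (L M W : ℝ) (hL : 0 ≤ L) (hM : 0 ≤ M) (hW : 0 ≤ W)
    (hA : ∀ t ≤ T, ‖A t‖ ≤ M)
    (hS : ∀ t ≤ T, ∀ z : EuclideanSpace ℝ (Fin n), ‖z‖ ≤ 1 → ‖S t z‖ ≤ L * ‖z‖ ^ 2)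
    (hw : ∀ t ≤ T, ‖w t‖ ≤ W)
    (x xl : ℝ → ℕ → EuclideanSpace ℝ (Fin n))
    (hx0 : ∀ ε, x ε 0 = 0)
    (hxrec : ∀ ε t, x ε (t + 1) = A t (x ε t) + S t (x ε t) + ε • w t)
    (hxl0 : ∀ ε, xl ε 0 = 0)
    (hxlrec : ∀ ε t, xl ε (t + 1) = A t (xl ε t) + ε • w t) :
    ∃ ε₀ > 0, ∃ K : ℝ, ∀ ε : ℝ, 0 < ε → ε < ε₀ →
      ∀ t ≤ T, ‖x ε t - xl ε t‖ ≤ K * ε ^ 2 := by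
  obtain ⟨c, hc0, hcrec⟩ : ∃ c : ℕ → ℝ, c 0 = 0 ∧
      ∀ t, c (t + 1) = M * c t + L * (c t) ^ 2 + W + c t :=
    ⟨fun t => Nat.rec 0 (fun _ ct => M * ct + L * ct ^ 2 + W + ct) t, rfl, fun _ => rfl⟩
  obtain ⟨k, hk0, hkrec⟩ : ∃ k : ℕ → ℝ, k 0 = 0 ∧
      ∀ t, k (t + 1) = M * k t + L * (c t) ^ 2 + k t :=
    ⟨fun t => Nat.rec 0 (fun t kt => M * kt + L * (c t) ^ 2 + kt) t, rfl, fun _ => rfl⟩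
  have hcnn : ∀ t, 0 ≤ c t := by
    intro t; induction t with
    | zero => simp [hc0]
    | succ t ih =>
      rw [hcrec]
      nlinarith [mul_nonneg hM ih, mul_nonneg hL (sq_nonneg (c t))]
  have hknn : ∀ t, 0 ≤ k t := by
    intro t; induction t with
    | zero => simp [hk0]
    | succ t ih =>
      rw [hkrec]
      nlinarith [mul_nonneg hM ih, mul_nonneg hL (sq_nonneg (c t))]
  have hcmono : ∀ s t : ℕ, s ≤ t → c s ≤ c t := by
    intro s t h
    induction t with
    | zero => simp [Nat.le_zero.mp h]
    | succ t ih =>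
      rcases Nat.lt_or_ge s (t + 1) with h' | h'
      · have h2 := ih (Nat.lt_succ_iff.mp h')
        rw [hcrec]
        nlinarith [mul_nonneg hM (hcnn t), mul_nonneg hL (sq_nonneg (c t))]
      · have hs : s = t + 1 := le_antisymm h h'
        simp [hs]
  have hkmono : ∀ s t : ℕ, s ≤ t → k s ≤ k t := by
    intro s t h
    induction t with
    | zero => simp [Nat.le_zero.mp h]
    | succ t ih =>
      rcases Nat.lt_or_ge s (t + 1) with h' | h'
      · have h2 := ih (Nat.lt_succ_iff.mp h')
        rw [hkrec]
        nlinarith [mul_nonneg hM (hknn t), mul_nonneg hL (sq_nonneg (c t))]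
      · have hs : s = t + 1 := le_antisymm h h'
        simp [hs]
  have hcT1 : 0 < c T + 1 := by linarith [hcnn T]
  refine ⟨1 / (c T + 1), by positivity, k T, ?_⟩
  intro ε hε hε' t ht
  have hεc : ε * (c T + 1) < 1 := (lt_div_iff₀ hcT1).mp hε'
  have hε1 : ε < 1 := by nlinarith [hcnn T]
  have main : ∀ t, t ≤ T → ‖x ε t‖ ≤ ε * c t ∧ ‖x ε t - xl ε t‖ ≤ k t * ε ^ 2 := by
    intro t
    induction t with
    | zero => intro _; simp [hx0, hxl0, hc0, hk0]
    | succ t ih =>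
      intro hts
      have htT : t ≤ T := Nat.le_of_succ_le hts
      obtain ⟨h1, h2⟩ := ih htT
      have hle1 : ‖x ε t‖ ≤ 1 := by
        have h3 : ε * c t ≤ ε * c T := mul_le_mul_of_nonneg_left (hcmono t T htT) hε.le
        nlinarith
      have hAb := hA t htT
      have hSb := hS t htT (x ε t) hle1
      have hwb := hw t htT
      have hSb2 : ‖S t (x ε t)‖ ≤ L * (ε * c t) ^ 2 := by
        refine hSb.trans (mul_le_mul_of_nonneg_left ?_ hL)
        exact pow_le_pow_left₀ (norm_nonneg _) h1 2
      constructor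
      · rw [hxrec]
        have hb : ‖A t (x ε t) + S t (x ε t) + ε • w t‖ ≤
            M * (ε * c t) + L * (ε * c t) ^ 2 + ε * W := by
          refine norm_add₃_le.trans ?_
          gcongr
          · exact ((A t).le_opNorm _).trans
              (mul_le_mul hAb h1 (norm_nonneg _) hM)
          · calc ‖ε • w t‖ = ε * ‖w t‖ := by
                  rw [norm_smul, Real.norm_eq_abs, abs_of_pos hε]
              _ ≤ ε * W := by gcongr
        refine hb.trans ?_
        rw [hcrec]
        have hεct : 0 ≤ ε * c t := mul_nonneg hε.le (hcnn t)
        nlinarith [mul_nonneg hL (sq_nonneg (c t)), hcnn t,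
          mul_nonneg (mul_nonneg hL (sq_nonneg (c t))) (mul_nonneg hε.le (sub_nonneg.mpr hε1.le))]
      · have heq : x ε (t + 1) - xl ε (t + 1) = A t (x ε t - xl ε t) + S t (x ε t) := by
          rw [hxrec, hxlrec, map_sub]; abel
        rw [heq]
        refine (norm_add_le _ _).trans ?_
        have hb1 : ‖A t (x ε t - xl ε t)‖ ≤ M * (k t * ε ^ 2) :=
          ((A t).le_opNorm _).trans (mul_le_mul hAb h2 (norm_nonneg _) hM)
        rw [hkrec]
        nlinarith [mul_nonneg hL (sq_nonneg (c t)), sq_nonneg ε, hknn t,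
          mul_nonneg hε.le (hcnn t)]
  have := (main t ht).2
  refine this.trans ?_
  have := hkmono t T ht
  nlinarith [sq_nonneg ε]
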